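/- Let γ : ℝ^d → ℝ be a continuous variogram and fix η ∈ ℝ^d. Then the function φ_η : ℝ^d → ℝ defined by φ_η(ξ) = 2γ(η) + 2γ(ξ) − γ(ξ + η) − γ(ξ − η) is a continuous variogram on ℝ^d; moreover φ_η(ξ) is symmetric in the pair (ξ, η), i.e. φ_η(ξ) = φ_ξ(η) for all ξ, η ∈ ℝ^d. -/

import Mathlib

/-!
The increment `φ_η` is the variogram quadratic form of `γ` evaluated on a doubled configuration:
for points `ξ i` with weights `a i` summing to zero, adjoin the shifted points `ξ i - η` with the
opposite weights `-a i`. The new weights still sum to zero, the constant `2 γ(η)` is killed by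
`∑ a i = 0`, and the four blocks of the doubled form reproduce `2γ(ξ) - γ(ξ + η) - γ(ξ - η)`.
Symmetry in `(ξ, η)` comes from evenness of `γ`, as `η - ξ = -(ξ - η)`.
-/

open scoped BigOperators

/-- A variogram on `ℝ^d`: nonnegative at the origin, even, and conditionally negative
definite (for complex weights summing to zero, the quadratic form is real and `≤ 0`). -/
def IsVariogram {d : ℕ} (γ : EuclideanSpace ℝ (Fin d) → ℝ) : Prop :=
  0 ≤ γ 0 ∧ (∀ ξ, γ (-ξ) = γ ξ) ∧
    ∀ (n : ℕ) (ξ : Fin n → EuclideanSpace ℝ (Fin d)) (a : Fin n → ℂ),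
      (∑ i, a i) = 0 →
      (∑ i, ∑ j, a i * (γ (ξ i - ξ j) : ℂ) * (starRingEnd ℂ) (a j)).im = 0 ∧
      (∑ i, ∑ j, a i * (γ (ξ i - ξ j) : ℂ) * (starRingEnd ℂ) (a j)).re ≤ 0

open ComplexConjugate

section KernelForm

variable {E : Type*} [AddCommGroup E]

def kernelForm {n : ℕ} (f : E → ℝ) (ξ : Fin n → E) (a : Fin n → ℂ) : ℂ :=
  ∑ i, ∑ j, a i * (f (ξ i - ξ j) : ℂ) * conj (a j)

def secondDifference (f : E → ℝ) (η ξ : E) : ℝ :=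
  2 * f η + 2 * f ξ - f (ξ + η) - f (ξ - η)

lemma kernelForm_append_sub {n : ℕ} (f : E → ℝ) (η : E) (ξ : Fin n → E) (a : Fin n → ℂ) :
    kernelForm f (Fin.append ξ fun i => ξ i - η) (Fin.append a fun i => -a i) =
      2 * kernelForm f ξ a - kernelForm (fun x => f (x + η)) ξ a -
        kernelForm (fun x => f (x - η)) ξ a := by
  have h₁ : ∀ i j : Fin n, ξ i - (ξ j - η) = ξ i - ξ j + η := fun i j => by abel
  have h₂ : ∀ i j : Fin n, ξ i - η - ξ j = ξ i - ξ j - η := fun i j => by abel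
  have h₃ : ∀ i j : Fin n, ξ i - η - (ξ j - η) = ξ i - ξ j := fun i j => by abel
  simp only [kernelForm, Fin.sum_univ_add, Fin.append_left, Fin.append_right, h₁, h₂, h₃,
    map_neg, Finset.mul_sum, ← Finset.sum_sub_distrib, ← Finset.sum_add_distrib]
  refine Finset.sum_congr rfl fun i _ => Finset.sum_congr rfl fun j _ => ?_
  ring

lemma kernelForm_secondDifference {n : ℕ} (f : E → ℝ) (η : E) (ξ : Fin n → E) (a : Fin n → ℂ)
    (ha : ∑ i, a i = 0) :
    kernelForm (secondDifference f η) ξ a =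
      2 * kernelForm f ξ a - kernelForm (fun x => f (x + η)) ξ a -
        kernelForm (fun x => f (x - η)) ξ a := by
  have hconst : ∑ i, ∑ j, a i * (2 * f η : ℂ) * conj (a j) = 0 := by
    simp only [← Finset.mul_sum, ← map_sum, ha, map_zero, mul_zero, Finset.sum_const_zero]
  rw [← sub_eq_zero, ← hconst]
  simp only [kernelForm, secondDifference, Finset.mul_sum, ← Finset.sum_sub_distrib]
  refine Finset.sum_congr rfl fun i _ => Finset.sum_congr rfl fun j _ => ?_
  push_cast
  ring

lemma secondDifference_neg {f : E → ℝ} (hf : ∀ x, f (-x) = f x) (η ξ : E) :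
    secondDifference f η (-ξ) = secondDifference f η ξ := by
  have h₁ : -ξ + η = -(ξ - η) := by abel
  have h₂ : -ξ - η = -(ξ + η) := by abel
  rw [secondDifference, secondDifference, h₁, h₂, hf, hf, hf]
  ring

lemma secondDifference_comm {f : E → ℝ} (hf : ∀ x, f (-x) = f x) (η ξ : E) :
    secondDifference f η ξ = secondDifference f ξ η := by
  rw [secondDifference, secondDifference, ← hf (η - ξ), neg_sub, add_comm η ξ]
  ring

end KernelForm

lemma IsVariogram.secondDifference {d : ℕ} {γ : EuclideanSpace ℝ (Fin d) → ℝ}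
    (hγ : IsVariogram γ) (η : EuclideanSpace ℝ (Fin d)) :
    IsVariogram (secondDifference γ η) := by
  obtain ⟨h0, heven, hcnd⟩ := hγ
  refine ⟨?_, fun ξ => ?_, fun n ξ a ha => ?_⟩
  · simp only [_root_.secondDifference, zero_add, zero_sub, heven]
    linarith
  · exact secondDifference_neg heven η ξ
  · have hsum : ∑ i, Fin.append a (fun i => -a i) i = 0 := by
      simp only [Fin.sum_univ_add, Fin.append_left, Fin.append_right, Finset.sum_neg_distrib, ha,
        neg_zero, add_zero]
    change (kernelForm _ ξ a).im = 0 ∧ (kernelForm _ ξ a).re ≤ 0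
    rw [kernelForm_secondDifference γ η ξ a ha, ← kernelForm_append_sub]
    exact hcnd _ _ _ hsum

/-- If γ is a continuous variogram and η is fixed, then
φ_η(ξ) = 2γ(η) + 2γ(ξ) − γ(ξ+η) − γ(ξ−η) is a continuous variogram, and it is symmetric
in the pair (ξ, η). -/
theorem stmt12 {d : ℕ} (γ : EuclideanSpace ℝ (Fin d) → ℝ)
    (hγ : IsVariogram γ) (hc : Continuous γ) (η : EuclideanSpace ℝ (Fin d)) :
    Continuous (fun ξ : EuclideanSpace ℝ (Fin d) =>
      2 * γ η + 2 * γ ξ - γ (ξ + η) - γ (ξ - η)) ∧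
    IsVariogram (fun ξ : EuclideanSpace ℝ (Fin d) =>
      2 * γ η + 2 * γ ξ - γ (ξ + η) - γ (ξ - η)) ∧
    ∀ ξ : EuclideanSpace ℝ (Fin d),
      2 * γ η + 2 * γ ξ - γ (ξ + η) - γ (ξ - η) =
      2 * γ ξ + 2 * γ η - γ (η + ξ) - γ (η - ξ) :=
  ⟨by fun_prop, hγ.secondDifference η, secondDifference_comm hγ.2.1 η⟩
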